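/- arXiv:1710.09600 — 2 statements merged into one kernel-verified Lean document; each statement's English description precedes it below -/
import Mathlib

section
/- The formula dist((x1,y1),(x2,y2)) = arccosh(1 + ((x2-x1)^2+(y2-y1)^2)/(2 y1 y2)) defines a metric on the upper half-plane {(x,y) : y > 0}; in particular it satisfies the triangle inequality. -/
/-- Inverse hyperbolic cosine on `[1, ∞)`. -/
noncomputable def arcosh (t : ℝ) : ℝ := Real.log (t + Real.sqrt (t ^ 2 - 1))

/-- The hyperbolic distance in the upper half-plane. -/
noncomputable def hypDist (p q : ℝ × ℝ) : ℝ :=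
  arcosh (1 + ((q.1 - p.1) ^ 2 + (q.2 - p.2) ^ 2) / (2 * p.2 * q.2))

lemma arcosh_cosh {x : ℝ} (hx : 0 ≤ x) : arcosh (Real.cosh x) = x := by
  have h1 : Real.cosh x ^ 2 - 1 = Real.sinh x ^ 2 := by
    rw [Real.cosh_sq']; ring
  have h2 : Real.sqrt (Real.cosh x ^ 2 - 1) = Real.sinh x := by
    rw [h1, Real.sqrt_sq (Real.sinh_nonneg_iff.2 hx)]
  rw [arcosh, h2, Real.cosh_eq, Real.sinh_eq]
  have : (Real.exp x + Real.exp (-x)) / 2 + (Real.exp x - Real.exp (-x)) / 2 = Real.exp x := by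
    ring
  rw [this, Real.log_exp]

lemma hypDist_eq (z w : UpperHalfPlane) :
    hypDist (z.re, z.im) (w.re, w.im) = dist z w := by
  have hd : dist (z : ℂ) (w : ℂ) ^ 2 = (w.re - z.re) ^ 2 + (w.im - z.im) ^ 2 := by
    rw [Complex.dist_eq, Complex.sq_norm, Complex.normSq_apply]
    simp [Complex.sub_re, Complex.sub_im]
    ring
  have := UpperHalfPlane.cosh_dist z w
  rw [hd] at this
  have h := arcosh_cosh (dist_nonneg : (0:ℝ) ≤ dist z w)
  rw [this] at h
  simpa [hypDist] using h

/-- The formula `dist(p,q) = arccosh (1 + (|p - q|²)/(2 p₂ q₂))` defines a metric on the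
upper half-plane `{(x, y) : y > 0}`: it is nonnegative, vanishes exactly on the diagonal,
is symmetric, and satisfies the triangle inequality. -/
theorem hypDist_is_metric :
    ∀ p q s : ℝ × ℝ, 0 < p.2 → 0 < q.2 → 0 < s.2 →
      (0 ≤ hypDist p q) ∧ (hypDist p p = 0) ∧ (hypDist p q = 0 → p = q) ∧
        (hypDist p q = hypDist q p) ∧ (hypDist p s ≤ hypDist p q + hypDist q s) := by
  intro p q s hp hq hs
  set zp : UpperHalfPlane := UpperHalfPlane.mk ⟨p.1, p.2⟩ hp with hzp
  set zq : UpperHalfPlane := UpperHalfPlane.mk ⟨q.1, q.2⟩ hq with hzq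
  set zs : UpperHalfPlane := UpperHalfPlane.mk ⟨s.1, s.2⟩ hs with hzs
  have ep : (zp.re, zp.im) = p := rfl
  have eq' : (zq.re, zq.im) = q := rfl
  have es : (zs.re, zs.im) = s := rfl
  have hpq : hypDist p q = dist zp zq := by rw [← ep, ← eq']; exact hypDist_eq zp zq
  have hps : hypDist p s = dist zp zs := by rw [← ep, ← es]; exact hypDist_eq zp zs
  have hqs : hypDist q s = dist zq zs := by rw [← eq', ← es]; exact hypDist_eq zq zs
  have hqp : hypDist q p = dist zq zp := by rw [← eq', ← ep]; exact hypDist_eq zq zp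
  have hpp : hypDist p p = dist zp zp := by rw [← ep]; exact hypDist_eq zp zp
  refine ⟨by rw [hpq]; exact dist_nonneg, by rw [hpp, dist_self], ?_, by rw [hpq, hqp, dist_comm],
    by rw [hps, hpq, hqs]; exact dist_triangle zp zq zs⟩
  intro h
  rw [hpq] at h
  have : zp = zq := eq_of_dist_eq_zero h
  have hc : (⟨p.1, p.2⟩ : ℂ) = ⟨q.1, q.2⟩ := congrArg UpperHalfPlane.coe this
  have h1 : p.1 = q.1 := congrArg Complex.re hc
  have h2 : p.2 = q.2 := congrArg Complex.im hc
  exact Prod.ext h1 h2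
end

section
/- Quantitative implicit function theorem: Let X, Y, Z be Banach spaces, U ⊆ X, V ⊆ Y open, F ∈ C¹(U×V; Z), a = (a1,a2) ∈ U×V with F(a) = 0 and D₂F(a) : Y → Z an isomorphism. Set λ = (1/2)(1 + ‖D₂F(a)^{-1}‖(1 + ‖D₁F(a)‖))^{-1} and let r > 0 be such that B̄_r(a) ⊆ U×V and ‖DF(x,y) − DF(x̃,ỹ)‖ ≤ λ for all (x,y),(x̃,ỹ) ∈ B̄_r(a). Then for all x ∈ U with ‖x − a1‖ ≤ λr there exists a unique y ∈ V with ‖y − a2‖ ≤ r and F(x,y) = 0. -/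
/-!
For fixed `x`, the mean value inequality and the oscillation bound on `DF` show that
`y ↦ F (x, y)` differs from the isomorphism `B = D₂F(a)` by a `λ`-Lipschitz map on `B̄_r(a₂)`.
Since `‖B⁻¹‖ λ ≤ 1/2`, such a map is injective on the ball and, by the contraction
`y ↦ y - B⁻¹ F (x, y)`, maps it onto the ball of radius `(‖B⁻¹‖⁻¹ - λ) r` around `F (x, a₂)`.
The same mean value estimate in `x` gives `‖F (x, a₂)‖ ≤ (λ + ‖D₁F(a)‖) λ r`, and the choice of `λ`
makes this small enough for `0` to lie in that image ball.
-/

open Metric Set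
open scoped NNReal

theorem Convex.approximatesLinearOn_of_norm_hasFDerivWithin_sub_le
    {E F : Type*} [NormedAddCommGroup E] [NormedSpace ℝ E] [NormedAddCommGroup F]
    [NormedSpace ℝ F] {f : E → F} {f' : E → E →L[ℝ] F} {φ : E →L[ℝ] F} {s : Set E} {c : ℝ≥0}
    (hs : Convex ℝ s) (hf : ∀ x ∈ s, HasFDerivWithinAt f (f' x) s x)
    (bound : ∀ x ∈ s, ‖f' x - φ‖ ≤ c) :
    ApproximatesLinearOn f φ s c :=
  fun _ hx _ hy => hs.norm_image_sub_le_of_norm_hasFDerivWithin_le' hf bound hy hx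

namespace ApproximatesLinearOn

variable {𝕜 : Type*} [NontriviallyNormedField 𝕜]
  {E F G : Type*} [NormedAddCommGroup E] [NormedSpace 𝕜 E] [NormedAddCommGroup F]
  [NormedSpace 𝕜 F] [NormedAddCommGroup G] [NormedSpace 𝕜 G] {c : ℝ≥0}

theorem comp_prodMk_left {f : E × G → F} {L : E × G →L[𝕜] F} {s : Set E} {t : Set G}
    (hf : ApproximatesLinearOn f L (s ×ˢ t) c) {y : G} (hy : y ∈ t) :
    ApproximatesLinearOn (fun x => f (x, y)) (L.comp (.inl 𝕜 E G)) s c := by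
  intro x hx x' hx'
  simpa [Prod.norm_def] using hf (x, y) ⟨hx, hy⟩ (x', y) ⟨hx', hy⟩

theorem comp_prodMk_right {f : E × G → F} {L : E × G →L[𝕜] F} {s : Set E} {t : Set G}
    (hf : ApproximatesLinearOn f L (s ×ˢ t) c) {x : E} (hx : x ∈ s) :
    ApproximatesLinearOn (fun y => f (x, y)) (L.comp (.inr 𝕜 E G)) t c := by
  intro y hy y' hy'
  simpa [Prod.norm_def] using hf (x, y) ⟨hx, hy⟩ (x, y') ⟨hx, hy'⟩

theorem existsUnique_mem_closedBall_eq_zero [CompleteSpace E] {f : E → F} {f' : E ≃L[𝕜] F}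
    {b : E} {ε : ℝ} (hf : ApproximatesLinearOn f (f' : E →L[𝕜] F) (closedBall b ε) c)
    (hε : 0 ≤ ε) (hc : ‖(f'.symm : F →L[𝕜] E)‖ * c < 1)
    (hfb : ‖(f'.symm : F →L[𝕜] E)‖ * ‖f b‖ ≤ (1 - ‖(f'.symm : F →L[𝕜] E)‖ * c) * ε) :
    ∃! y, y ∈ closedBall b ε ∧ f y = 0 := by
  rcases f'.subsingleton_or_nnnorm_symm_pos with hE | hN
  · have : Subsingleton F := (Equiv.subsingleton_congr f'.toEquiv).1 hE
    exact ⟨b, ⟨mem_closedBall_self hε, Subsingleton.elim _ _⟩, fun _ _ => Subsingleton.elim _ _⟩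
  set N := ‖(f'.symm : F →L[𝕜] E)‖₊
  have hcN : c < N⁻¹ := by
    rwa [NNReal.lt_inv_iff_mul_lt hN.ne', mul_comm, ← NNReal.coe_lt_coe]
  have hzero : (0 : F) ∈ closedBall (f b) (((N : ℝ)⁻¹ - c) * ε) := by
    have hN' : (0 : ℝ) < N := hN
    rw [mem_closedBall, dist_zero_left]
    calc ‖f b‖ = (N : ℝ)⁻¹ * (N * ‖f b‖) := by field_simp
      _ ≤ (N : ℝ)⁻¹ * ((1 - N * c) * ε) := mul_le_mul_of_nonneg_left hfb (by positivity)
      _ = ((N : ℝ)⁻¹ - c) * ε := by field_simp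
  obtain ⟨y, hy, hfy⟩ :=
    hf.surjOn_closedBall_of_nonlinearRightInverse f'.toNonlinearRightInverse hε subset_rfl hzero
  exact ⟨y, ⟨hy, hfy⟩, fun z hz => hf.injOn (.inr hcN) hz.1 hy (hz.2.trans hfy.symm)⟩

end ApproximatesLinearOn

theorem quantitative_implicit_function_constant_bounds {c d lam : ℝ} (hc : 0 ≤ c) (hd : 0 ≤ d)
    (hlam : lam = 1 / 2 * (1 + c * (1 + d))⁻¹) :
    0 ≤ lam ∧ lam ≤ 1 ∧ c * lam < 1 ∧ c * ((d + lam) * lam) ≤ 1 - c * lam := by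
  have hlam_eq : lam * (1 + c * (1 + d)) = 1 / 2 := by
    rw [hlam, mul_assoc, inv_mul_cancel₀ (by positivity), mul_one]
  have hlam0 : 0 ≤ lam := by rw [hlam]; positivity
  have hcdlam : 0 ≤ c * lam * d := by positivity
  exact ⟨hlam0, by nlinarith, by nlinarith, by nlinarith⟩

theorem quantitative_implicit_function_general
    {X Y Z : Type*} [NormedAddCommGroup X] [NormedSpace ℝ X]
    [NormedAddCommGroup Y] [NormedSpace ℝ Y] [CompleteSpace Y]
    [NormedAddCommGroup Z] [NormedSpace ℝ Z]
    (U : Set X) (V : Set Y)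
    (F : X × Y → Z) (F' : X × Y → (X × Y) →L[ℝ] Z)
    (hderiv : ∀ p ∈ U ×ˢ V, HasFDerivAt F (F' p) p)
    (a₁ : X) (a₂ : Y) (hFa : F (a₁, a₂) = 0)
    (B : Y ≃L[ℝ] Z)
    (hB : (B : Y →L[ℝ] Z) = (F' (a₁, a₂)).comp (ContinuousLinearMap.inr ℝ X Y))
    (lam r : ℝ)
    (hlam : lam = (1 / 2) * (1 + ‖(B.symm : Z →L[ℝ] Y)‖ *
      (1 + ‖(F' (a₁, a₂)).comp (ContinuousLinearMap.inl ℝ X Y)‖))⁻¹)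
    (hr : 0 < r) (hball : closedBall (a₁, a₂) r ⊆ U ×ˢ V)
    (hlip : ∀ p ∈ closedBall (a₁, a₂) r, ∀ q ∈ closedBall (a₁, a₂) r,
      ‖F' p - F' q‖ ≤ lam) :
    ∀ x ∈ U, ‖x - a₁‖ ≤ lam * r →
      ∃! y, y ∈ V ∧ ‖y - a₂‖ ≤ r ∧ F (x, y) = 0 := by
  intro x _ hx
  set c := ‖(B.symm : Z →L[ℝ] Y)‖
  set A₁ := (F' (a₁, a₂)).comp (ContinuousLinearMap.inl ℝ X Y)
  obtain ⟨hlam0, hlam1, hclam, hclam'⟩ :=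
    quantitative_implicit_function_constant_bounds (norm_nonneg _) (norm_nonneg A₁) hlam
  have hxr : x ∈ closedBall a₁ r :=
    mem_closedBall_iff_norm.2 (hx.trans (mul_le_of_le_one_left hr.le hlam1))
  have ha₂ : a₂ ∈ closedBall a₂ r := mem_closedBall_self hr.le
  rw [← closedBall_prod_same] at hball hlip
  lift lam to ℝ≥0 using hlam0
  have hF : ApproximatesLinearOn F (F' (a₁, a₂)) (closedBall a₁ r ×ˢ closedBall a₂ r) lam :=
    (convex_closedBall a₁ r).prod (convex_closedBall a₂ r)
      |>.approximatesLinearOn_of_norm_hasFDerivWithin_sub_le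
      (fun p hp => (hderiv p (hball hp)).hasFDerivWithinAt)
      (fun p hp => hlip p hp _ ⟨mem_closedBall_self hr.le, ha₂⟩)
  have hFy : ApproximatesLinearOn (fun y => F (x, y)) (B : Y →L[ℝ] Z) (closedBall a₂ r) lam :=
    hB ▸ hF.comp_prodMk_right hxr
  have hFx : ‖F (x, a₂)‖ ≤ (‖A₁‖ + lam) * ‖x - a₁‖ := by
    simpa [hFa, Subtype.dist_eq, dist_eq_norm] using
      (hF.comp_prodMk_left ha₂).lipschitz.dist_le_mul ⟨x, hxr⟩ ⟨a₁, mem_closedBall_self hr.le⟩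
  have hFx' : c * ‖F (x, a₂)‖ ≤ (1 - c * lam) * r :=
    calc c * ‖F (x, a₂)‖ ≤ c * ((‖A₁‖ + lam) * (lam * r)) := by gcongr; exact hFx.trans (by gcongr)
      _ = c * ((‖A₁‖ + lam) * lam) * r := by ring
      _ ≤ (1 - c * lam) * r := by gcongr
  obtain ⟨y, ⟨hy, hFy0⟩, huniq⟩ := hFy.existsUnique_mem_closedBall_eq_zero hr.le hclam hFx'
  exact ⟨y, ⟨(hball (mk_mem_prod hxr hy)).2, mem_closedBall_iff_norm.1 hy, hFy0⟩,
    fun z ⟨_, hz, hFz⟩ => huniq z ⟨mem_closedBall_iff_norm.2 hz, hFz⟩⟩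

/-- Quantitative implicit function theorem: let `F : U × V → Z` be `C¹`, `F(a) = 0`,
`D₂F(a)` an isomorphism, `λ = (1/2)(1 + ‖D₂F(a)⁻¹‖(1 + ‖D₁F(a)‖))⁻¹`, and suppose
`‖DF(p) - DF(q)‖ ≤ λ` on a closed ball `B̄_r(a) ⊆ U × V`. Then every `x ∈ U` with
`‖x - a₁‖ ≤ λ r` admits a unique `y ∈ V` with `‖y - a₂‖ ≤ r` and `F(x,y) = 0`. -/
theorem quantitative_implicit_function
    {X Y Z : Type*} [NormedAddCommGroup X] [NormedSpace ℝ X] [CompleteSpace X]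
    [NormedAddCommGroup Y] [NormedSpace ℝ Y] [CompleteSpace Y]
    [NormedAddCommGroup Z] [NormedSpace ℝ Z] [CompleteSpace Z]
    (U : Set X) (V : Set Y) (hU : IsOpen U) (hV : IsOpen V)
    (F : X × Y → Z) (F' : X × Y → (X × Y) →L[ℝ] Z)
    (hderiv : ∀ p ∈ U ×ˢ V, HasFDerivAt F (F' p) p) (hcont : ContinuousOn F' (U ×ˢ V))
    (a₁ : X) (a₂ : Y) (ha : (a₁, a₂) ∈ U ×ˢ V) (hFa : F (a₁, a₂) = 0)
    (B : Y ≃L[ℝ] Z)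
    (hB : (B : Y →L[ℝ] Z) = (F' (a₁, a₂)).comp (ContinuousLinearMap.inr ℝ X Y))
    (lam r : ℝ)
    (hlam : lam = (1 / 2) * (1 + ‖(B.symm : Z →L[ℝ] Y)‖ *
      (1 + ‖(F' (a₁, a₂)).comp (ContinuousLinearMap.inl ℝ X Y)‖))⁻¹)
    (hr : 0 < r) (hball : closedBall (a₁, a₂) r ⊆ U ×ˢ V)
    (hlip : ∀ p ∈ closedBall (a₁, a₂) r, ∀ q ∈ closedBall (a₁, a₂) r,
      ‖F' p - F' q‖ ≤ lam) :
    ∀ x ∈ U, ‖x - a₁‖ ≤ lam * r →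
      ∃! y, y ∈ V ∧ ‖y - a₂‖ ≤ r ∧ F (x, y) = 0 :=
  quantitative_implicit_function_general U V F F' hderiv a₁ a₂ hFa B hB lam r hlam hr hball hlip
end
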